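/- arXiv:1204.1883 — 6 statements merged into one kernel-verified Lean document; each statement's English description precedes it below -/
import Mathlib

section
/- Lemma 3.2: The subspace C^D is stable under the right H-action: if c ∈ C satisfies Σ c⁽¹⁾ ⊗ π(c⁽²⁾) = Σ c⁽²⁾ ⊗ π(c⁽¹⁾) in C ⊗ D, then for every h ∈ H the element c ◁ h satisfies Σ (c ◁ h)⁽¹⁾ ⊗ π((c ◁ h)⁽²⁾) = Σ (c ◁ h)⁽²⁾ ⊗ π((c ◁ h)⁽¹⁾). -/
open TensorProduct

noncomputable section

variable (k : Type*) [Field k]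
variable (H : Type*) [Ring H] [HopfAlgebra k H]
variable (C : Type*) [AddCommGroup C] [Module k C] [Coalgebra k C]

/-- The linearization `C ⊗ H → C` of a bilinear right action `r : C → H → C`. -/
def actL (r : C →ₗ[k] H →ₗ[k] C) : C ⊗[k] H →ₗ[k] C := TensorProduct.lift r

/-- The subspace `I = span_k {c ◁ h - ε_H(h)·c}` of `C`. -/
def coidealI (r : C →ₗ[k] H →ₗ[k] C) : Submodule k C :=
  Submodule.span k {x : C | ∃ (c : C) (h : H), x = r c h - Coalgebra.counit (R := k) h • c}
variable (D : Type*) [AddCommGroup D] [Module k D] [Coalgebra k D]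

/-- `x ↦ Σ x⁽¹⁾ ⊗ π(x⁽²⁾) ⊗ x⁽³⁾`-type map: apply `Δ_C` then `π` on the first tensor
factor of `C ⊗ C`; first leg of the cotensor-product equalizer. -/
def cotL1 (π : C →ₗc[k] D) : C ⊗[k] C →ₗ[k] (C ⊗[k] D) ⊗[k] C :=
  ((π.toLinearMap.lTensor C) ∘ₗ Coalgebra.comul (R := k)).rTensor C

/-- Second leg of the cotensor-product equalizer: apply `Δ_C` then `π` on the second
tensor factor of `C ⊗ C`. -/
def cotL2 (π : C →ₗc[k] D) : C ⊗[k] C →ₗ[k] (C ⊗[k] D) ⊗[k] C :=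
  (TensorProduct.assoc k C D C).symm.toLinearMap ∘ₗ
    ((π.toLinearMap.rTensor C) ∘ₗ Coalgebra.comul (R := k)).lTensor C

/-- The cotensor product `C □_D C`, as a subspace of `C ⊗ C`. -/
def cot (π : C →ₗc[k] D) : Submodule k (C ⊗[k] C) :=
  LinearMap.ker (cotL1 k C D π - cotL2 k C D π)

/-- The canonical map `β : C ⊗ H → C ⊗ C`, `c ⊗ h ↦ Σ c⁽¹⁾ ⊗ (c⁽²⁾ ◁ h)`. -/
def βmap (r : C →ₗ[k] H →ₗ[k] C) : C ⊗[k] H →ₗ[k] C ⊗[k] C :=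
  ((actL k H C r).lTensor C) ∘ₗ (TensorProduct.assoc k C C H).toLinearMap ∘ₗ
    ((Coalgebra.comul (R := k)).rTensor H)

/-- The map `κ₀ = (ε_C ⊗ id_H) ∘ g : C □_D C → H`. -/
def κmap (π : C →ₗc[k] D) (g : cot k C D π →ₗ[k] C ⊗[k] H) : cot k C D π →ₗ[k] H :=
  (TensorProduct.lid k H).toLinearMap ∘ₗ ((Coalgebra.counit (R := k) (A := C)).rTensor H) ∘ₗ g

/-- Membership in `C^D`: `Σ c⁽¹⁾ ⊗ π(c⁽²⁾) = Σ c⁽²⁾ ⊗ π(c⁽¹⁾)` in `C ⊗ D`. -/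
def memCD (π : C →ₗc[k] D) (c : C) : Prop :=
  (π.toLinearMap.lTensor C) (Coalgebra.comul (R := k) c) =
    (π.toLinearMap.lTensor C) ((TensorProduct.comm k C C) (Coalgebra.comul (R := k) c))

/-- Iterated comultiplication `c ↦ Σ c⁽¹⁾ ⊗ (c⁽²⁾ ⊗ c⁽³⁾)`. -/
def Δ3 : C →ₗ[k] C ⊗[k] (C ⊗[k] C) :=
  ((Coalgebra.comul (R := k) (A := C)).lTensor C) ∘ₗ Coalgebra.comul (R := k)

/-- Cyclic rotation `a ⊗ (b ⊗ c) ↦ b ⊗ (c ⊗ a)`. -/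
def rot3 : C ⊗[k] (C ⊗[k] C) →ₗ[k] C ⊗[k] (C ⊗[k] C) :=
  (TensorProduct.assoc k C C C).toLinearMap ∘ₗ
    (TensorProduct.comm k C (C ⊗[k] C)).toLinearMap

/-- The element `Σ c⁽²⁾ ⊗ (c⁽³⁾ ⊗ c⁽¹⁾)` of `C ⊗ (C ⊗ C)`. -/
def coactElem (c : C) : C ⊗[k] (C ⊗[k] C) := rot3 k C (Δ3 k C c)

/-- Lemma 3.2: the subspace `C^D` is stable under the right `H`-action: if `c ∈ C^D` then `c ◁ h ∈ C^D` for every `h ∈ H`. -/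
theorem lemma32_CD_stable
    (r : C →ₗ[k] H →ₗ[k] C) (π : C →ₗc[k] D)
    (hone : ∀ c : C, r c 1 = c)
    (hmul : ∀ (c : C) (h h' : H), r (r c h) h' = r c (h * h'))
    (hcomul : ∀ (c : C) (h : H),
      Coalgebra.comul (R := k) (r c h) =
        TensorProduct.map (actL k H C r) (actL k H C r)
          (TensorProduct.tensorTensorTensorComm k C C H H
            (Coalgebra.comul (R := k) c ⊗ₜ[k] Coalgebra.comul (R := k) h)))
    (hcounit : ∀ (c : C) (h : H),
      Coalgebra.counit (R := k) (r c h) =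
        Coalgebra.counit (R := k) c * Coalgebra.counit (R := k) h)
    (hπsurj : Function.Surjective π)
    (hker : LinearMap.ker π.toLinearMap = coidealI k H C r)
    :
    ∀ (c : C) (h : H), memCD k C D π c → memCD k C D π (r c h) := by
  intro c h hc
  have hπr : ∀ (x : C) (g : H),
      π.toLinearMap (r x g) = Coalgebra.counit (R := k) g • π.toLinearMap x := by
    intro x g
    have hmem : r x g - Coalgebra.counit (R := k) g • x ∈ LinearMap.ker π.toLinearMap := by
      rw [hker]; exact Submodule.subset_span ⟨x, g, rfl⟩
    have h0 := LinearMap.mem_ker.mp hmem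
    rw [map_sub, map_smul, sub_eq_zero] at h0
    exact h0
  -- First key computation: collapse the second H-leg via ε.
  have key1 : ∀ (x y : C),
      (π.toLinearMap.lTensor C) (TensorProduct.map (actL k H C r) (actL k H C r)
        (TensorProduct.tensorTensorTensorComm k C C H H
          ((x ⊗ₜ[k] y) ⊗ₜ[k] Coalgebra.comul (R := k) h)))
        = r x h ⊗ₜ[k] π.toLinearMap y := by
    intro x y
    have main : ∀ u : H ⊗[k] H,
        (π.toLinearMap.lTensor C) (TensorProduct.map (actL k H C r) (actL k H C r)
          (TensorProduct.tensorTensorTensorComm k C C H H ((x ⊗ₜ[k] y) ⊗ₜ[k] u)))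
          = r x ((TensorProduct.rid k H)
              ((Coalgebra.counit (R := k) (A := H)).lTensor H u)) ⊗ₜ[k] π.toLinearMap y := by
      intro u
      induction u using TensorProduct.induction_on with
      | zero => simp
      | tmul g g' =>
          simp only [TensorProduct.tensorTensorTensorComm_tmul, TensorProduct.map_tmul,
            actL, TensorProduct.lift.tmul, LinearMap.lTensor_tmul, hπr,
            TensorProduct.rid_tmul, TensorProduct.lid_tmul, TensorProduct.comm_tmul,
            LinearMap.rTensor_tmul, map_smul, TensorProduct.tmul_smul,
            TensorProduct.smul_tmul']
      | add u v hu hv =>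
          rw [TensorProduct.tmul_add, map_add, map_add, map_add, map_add, map_add, hu, hv,
            ← TensorProduct.add_tmul, ← map_add]
    rw [main, Coalgebra.lTensor_counit_comul]
    simp
  -- Second key computation: collapse the first H-leg via ε (after swapping factors).
  have key2 : ∀ (x y : C),
      (π.toLinearMap.lTensor C) ((TensorProduct.comm k C C)
        (TensorProduct.map (actL k H C r) (actL k H C r)
          (TensorProduct.tensorTensorTensorComm k C C H H
            ((x ⊗ₜ[k] y) ⊗ₜ[k] Coalgebra.comul (R := k) h))))
        = r y h ⊗ₜ[k] π.toLinearMap x := by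
    intro x y
    have main : ∀ u : H ⊗[k] H,
        (π.toLinearMap.lTensor C) ((TensorProduct.comm k C C)
          (TensorProduct.map (actL k H C r) (actL k H C r)
            (TensorProduct.tensorTensorTensorComm k C C H H ((x ⊗ₜ[k] y) ⊗ₜ[k] u))))
          = r y ((TensorProduct.lid k H)
              ((Coalgebra.counit (R := k) (A := H)).rTensor H u)) ⊗ₜ[k] π.toLinearMap x := by
      intro u
      induction u using TensorProduct.induction_on with
      | zero => simp
      | tmul g g' =>
          simp only [TensorProduct.tensorTensorTensorComm_tmul, TensorProduct.map_tmul,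
            actL, TensorProduct.lift.tmul, LinearMap.lTensor_tmul, hπr,
            TensorProduct.rid_tmul, TensorProduct.lid_tmul, TensorProduct.comm_tmul,
            LinearMap.rTensor_tmul, map_smul, TensorProduct.tmul_smul,
            TensorProduct.smul_tmul']
      | add u v hu hv =>
          rw [TensorProduct.tmul_add, map_add, map_add, map_add, map_add, map_add, map_add, hu,
            hv, ← TensorProduct.add_tmul, ← map_add]
    rw [main, Coalgebra.rTensor_counit_comul]
    simp
  -- Linearize over the first tensor slot.
  have E1 : ∀ t : C ⊗[k] C,
      (π.toLinearMap.lTensor C) (TensorProduct.map (actL k H C r) (actL k H C r)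
        (TensorProduct.tensorTensorTensorComm k C C H H (t ⊗ₜ[k] Coalgebra.comul (R := k) h)))
        = TensorProduct.map (r.flip h) π.toLinearMap t := by
    intro t
    induction t using TensorProduct.induction_on with
    | zero => simp
    | tmul x y => simpa using key1 x y
    | add t s ht hs =>
        rw [TensorProduct.add_tmul, map_add, map_add, map_add, map_add, ht, hs]
  have E2 : ∀ t : C ⊗[k] C,
      (π.toLinearMap.lTensor C) ((TensorProduct.comm k C C)
        (TensorProduct.map (actL k H C r) (actL k H C r)
          (TensorProduct.tensorTensorTensorComm k C C H H
            (t ⊗ₜ[k] Coalgebra.comul (R := k) h))))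
        = TensorProduct.map (r.flip h) π.toLinearMap ((TensorProduct.comm k C C) t) := by
    intro t
    induction t using TensorProduct.induction_on with
    | zero => simp
    | tmul x y => simpa using key2 x y
    | add t s ht hs =>
        rw [TensorProduct.add_tmul, map_add, map_add, map_add, map_add, map_add, map_add, ht, hs]
  unfold memCD at hc ⊢
  rw [hcomul c h, E1, E2, ← LinearMap.rTensor_comp_lTensor]
  simp only [LinearMap.comp_apply]
  rw [hc]

end
end

section
/- Lemma 3.5(i) (on representatives): Suppose the coextension is Hopf Galois with inverse g of the canonical map β, and κ₀ := (ε_C ⊗ id_H) ∘ g. For all c ∈ C and h, h' ∈ H, the element Σ (c⁽¹⁾ ◁ h) ⊗ (c⁽²⁾ ◁ h') lies in C □_D C and κ₀(Σ (c⁽¹⁾ ◁ h) ⊗ (c⁽²⁾ ◁ h')) = ε_C(c)·S(h)h' in H. -/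
open TensorProduct

noncomputable section

variable (k : Type*) [Field k]
variable (H : Type*) [Ring H] [HopfAlgebra k H]
variable (C : Type*) [AddCommGroup C] [Module k C] [Coalgebra k C]

variable (D : Type*) [AddCommGroup D] [Module k D] [Coalgebra k D]

/-- Auxiliary: `a ⊗ b ↦ Σᵢ (wᵢ⁽¹⁾ ◁ a) ⊗ (wᵢ⁽²⁾ ◁ b)` as a linear map in `a ⊗ b`. -/
def Pmap (r : C →ₗ[k] H →ₗ[k] C) (w : C ⊗[k] C) : H ⊗[k] H →ₗ[k] C ⊗[k] C :=
  TensorProduct.lift <| LinearMap.mk₂ k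
    (fun a b => TensorProduct.map (r.flip a) (r.flip b) w)
    (fun a a' b => by rw [map_add, TensorProduct.map_add_left, LinearMap.add_apply])
    (fun s a b => by rw [map_smul, TensorProduct.map_smul_left, LinearMap.smul_apply])
    (fun a b b' => by rw [map_add, TensorProduct.map_add_right, LinearMap.add_apply])
    (fun s a b => by rw [map_smul, TensorProduct.map_smul_right, LinearMap.smul_apply])

@[simp] lemma Pmap_tmul (r : C →ₗ[k] H →ₗ[k] C) (w : C ⊗[k] C) (a b : H) :
    Pmap k H C r w (a ⊗ₜ[k] b) = TensorProduct.map (r.flip a) (r.flip b) w := by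
  simp [Pmap]

set_option maxHeartbeats 1600000 in
set_option synthInstance.maxHeartbeats 400000 in
/-- Lemma 3.5(i): `Σ (c⁽¹⁾ ◁ h) ⊗ (c⁽²⁾ ◁ h')` lies in `C □_D C` and `κ₀` of it equals `ε_C(c)·S(h)h'`. -/
theorem lemma35_i
    (r : C →ₗ[k] H →ₗ[k] C) (π : C →ₗc[k] D)
    (hone : ∀ c : C, r c 1 = c)
    (hmul : ∀ (c : C) (h h' : H), r (r c h) h' = r c (h * h'))
    (hcomul : ∀ (c : C) (h : H),
      Coalgebra.comul (R := k) (r c h) =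
        TensorProduct.map (actL k H C r) (actL k H C r)
          (TensorProduct.tensorTensorTensorComm k C C H H
            (Coalgebra.comul (R := k) c ⊗ₜ[k] Coalgebra.comul (R := k) h)))
    (hcounit : ∀ (c : C) (h : H),
      Coalgebra.counit (R := k) (r c h) =
        Coalgebra.counit (R := k) c * Coalgebra.counit (R := k) h)
    (hπsurj : Function.Surjective π)
    (hker : LinearMap.ker π.toLinearMap = coidealI k H C r)
    (hβ : ∀ x : C ⊗[k] H, βmap k H C r x ∈ cot k C D π)
    (g : cot k C D π →ₗ[k] C ⊗[k] H)
    (hgβ : ∀ x : C ⊗[k] H, g ⟨βmap k H C r x, hβ x⟩ = x)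
    (hβg : ∀ y : cot k C D π, βmap k H C r (g y) = (y : C ⊗[k] C))
    :
    ∀ (c : C) (h h' : H),
      ∃ hm : TensorProduct.map (r.flip h) (r.flip h')
          (Coalgebra.comul (R := k) c) ∈ cot k C D π,
        κmap k H C D π g
            ⟨TensorProduct.map (r.flip h) (r.flip h') (Coalgebra.comul (R := k) c), hm⟩ =
          Coalgebra.counit (R := k) c • (HopfAlgebra.antipode (R := k) h * h') := by
  intro c h h'
  classical
  set m : H →ₗ[k] H :=
    LinearMap.mulRight k h' ∘ₗ HopfAlgebra.antipode (R := k) with hmdef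
  set x : C ⊗[k] H :=
    TensorProduct.map (r c) m (Coalgebra.comul (R := k) h) with hxdef
  -- core computation lemma
  have aux1 : ∀ (w : C ⊗[k] C) (v : H ⊗[k] H) (s : H),
      (LinearMap.lTensor C (actL k H C r)) ((TensorProduct.assoc k C C H)
        ((TensorProduct.map (actL k H C r) (actL k H C r)
          (TensorProduct.tensorTensorTensorComm k C C H H (w ⊗ₜ[k] v))) ⊗ₜ[k] s)) =
      Pmap k H C r w ((LinearMap.lTensor H (LinearMap.mul' k H))
        ((TensorProduct.assoc k H H H) (v ⊗ₜ[k] s))) := by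
    intro w v s
    induction v using TensorProduct.induction_on with
    | zero => simp
    | tmul a₁ a₂ =>
      simp only [TensorProduct.assoc_tmul, LinearMap.lTensor_tmul, LinearMap.mul'_apply,
        Pmap_tmul]
      induction w using TensorProduct.induction_on with
      | zero => simp
      | tmul c₁ c₂ =>
        simp only [TensorProduct.tensorTensorTensorComm_tmul, TensorProduct.map_tmul,
          TensorProduct.assoc_tmul, LinearMap.lTensor_tmul, actL, TensorProduct.lift.tmul,
          LinearMap.flip_apply]
        rw [hmul]
      | add w₁ w₂ ih₁ ih₂ =>
        simp only [TensorProduct.add_tmul, map_add, ih₁, ih₂]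
    | add v₁ v₂ ih₁ ih₂ =>
      simp only [TensorProduct.tmul_add, TensorProduct.add_tmul, map_add, ih₁, ih₂]
  -- β of the candidate preimage
  have stepβ : ∀ u : H ⊗[k] H,
      βmap k H C r (TensorProduct.map (r c) m u) =
      Pmap k H C r (Coalgebra.comul (R := k) c)
        ((LinearMap.lTensor H (LinearMap.mul' k H))
          ((TensorProduct.assoc k H H H)
            (((Coalgebra.comul (R := k) (A := H)).rTensor H)
              ((LinearMap.lTensor H m) u)))) := by
    intro u
    induction u using TensorProduct.induction_on with
    | zero => simp
    | tmul a b =>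
      simp only [TensorProduct.map_tmul, LinearMap.lTensor_tmul, LinearMap.rTensor_tmul,
        βmap, LinearMap.comp_apply, LinearEquiv.coe_coe]
      rw [hcomul]
      exact aux1 _ _ _
    | add u₁ u₂ ih₁ ih₂ =>
      simp only [map_add, ih₁, ih₂]
  -- pulling right multiplication by h' out
  have subA : ∀ (v : H ⊗[k] H) (s : H),
      (LinearMap.lTensor H (LinearMap.mul' k H))
        ((TensorProduct.assoc k H H H) (v ⊗ₜ[k] (s * h'))) =
      (LinearMap.lTensor H (LinearMap.mulRight k h'))
        ((LinearMap.lTensor H (LinearMap.mul' k H))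
          ((TensorProduct.assoc k H H H) (v ⊗ₜ[k] s))) := by
    intro v s
    induction v using TensorProduct.induction_on with
    | zero => simp
    | tmul a₁ a₂ => simp [mul_assoc]
    | add v₁ v₂ ih₁ ih₂ =>
      simp only [TensorProduct.add_tmul, map_add, ih₁, ih₂]
  have subA' : ∀ z : H ⊗[k] H,
      (LinearMap.lTensor H (LinearMap.mul' k H)) ((TensorProduct.assoc k H H H)
        (((Coalgebra.comul (R := k) (A := H)).rTensor H)
          ((LinearMap.lTensor H (LinearMap.mulRight k h')) z))) =
      (LinearMap.lTensor H (LinearMap.mulRight k h'))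
        ((LinearMap.lTensor H (LinearMap.mul' k H)) ((TensorProduct.assoc k H H H)
          (((Coalgebra.comul (R := k) (A := H)).rTensor H) z))) := by
    intro z
    induction z using TensorProduct.induction_on with
    | zero => simp
    | tmul a s =>
      simp only [LinearMap.lTensor_tmul, LinearMap.rTensor_tmul, LinearMap.mulRight_apply]
      exact subA _ _
    | add z₁ z₂ ih₁ ih₂ =>
      simp only [map_add, ih₁, ih₂]
  -- commuting antipode past comul ⊗ id
  have swapSL : ∀ z : H ⊗[k] H,
      ((Coalgebra.comul (R := k) (A := H)).rTensor H)
        ((LinearMap.lTensor H (HopfAlgebra.antipode (R := k))) z) =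
      (LinearMap.lTensor (H ⊗[k] H) (HopfAlgebra.antipode (R := k)))
        (((Coalgebra.comul (R := k) (A := H)).rTensor H) z) := by
    intro z
    induction z using TensorProduct.induction_on with
    | zero => simp
    | tmul a b => simp
    | add z₁ z₂ ih₁ ih₂ => simp only [map_add, ih₁, ih₂]
  -- reassociation lemma
  have subB : ∀ z : H ⊗[k] (H ⊗[k] H),
      (LinearMap.lTensor H (LinearMap.mul' k H)) ((TensorProduct.assoc k H H H)
        ((LinearMap.lTensor (H ⊗[k] H) (HopfAlgebra.antipode (R := k)))
          ((TensorProduct.assoc k H H H).symm z))) =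
      (LinearMap.lTensor H (LinearMap.mul' k H ∘ₗ
        (HopfAlgebra.antipode (R := k)).lTensor H)) z := by
    intro z
    induction z using TensorProduct.induction_on with
    | zero => simp
    | tmul a yz =>
      induction yz using TensorProduct.induction_on with
      | zero => simp
      | tmul b d => simp
      | add y₁ y₂ ih₁ ih₂ =>
        simp only [TensorProduct.tmul_add, map_add, ih₁, ih₂]
    | add z₁ z₂ ih₁ ih₂ => simp only [map_add, ih₁, ih₂]
  -- the Hopf-algebra computation : Σ h⁽¹⁾ ⊗ h⁽²⁾ S(h⁽³⁾) = h ⊗ 1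
  have hQ0 : (LinearMap.lTensor H (LinearMap.mul' k H))
      ((TensorProduct.assoc k H H H)
        (((Coalgebra.comul (R := k) (A := H)).rTensor H)
          ((LinearMap.lTensor H (HopfAlgebra.antipode (R := k)))
            (Coalgebra.comul (R := k) h)))) = h ⊗ₜ[k] (1 : H) := by
    rw [swapSL, ← Coalgebra.coassoc_symm_apply (R := k) h, subB,
      ← LinearMap.lTensor_comp_apply, LinearMap.comp_assoc,
      HopfAlgebra.mul_antipode_lTensor_comul,
      LinearMap.lTensor_comp_apply, Coalgebra.lTensor_counit_comul]
    simp
  -- the full preimage computation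
  have hQ : (LinearMap.lTensor H (LinearMap.mul' k H))
      ((TensorProduct.assoc k H H H)
        (((Coalgebra.comul (R := k) (A := H)).rTensor H)
          ((LinearMap.lTensor H m) (Coalgebra.comul (R := k) h)))) = h ⊗ₜ[k] h' := by
    rw [hmdef, LinearMap.lTensor_comp_apply, subA', hQ0]
    simp
  have claimA : βmap k H C r x =
      TensorProduct.map (r.flip h) (r.flip h') (Coalgebra.comul (R := k) c) := by
    rw [hxdef, stepβ, hQ, Pmap_tmul]
  refine ⟨claimA ▸ hβ x, ?_⟩
  have hsub : (⟨TensorProduct.map (r.flip h) (r.flip h') (Coalgebra.comul (R := k) c),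
      claimA ▸ hβ x⟩ : cot k C D π) = ⟨βmap k H C r x, hβ x⟩ := Subtype.ext claimA.symm
  rw [hsub]
  simp only [κmap, LinearMap.comp_apply, LinearEquiv.coe_coe, hgβ x]
  -- now compute (ε_C ⊗ id) x
  have claimB : ∀ u : H ⊗[k] H,
      (TensorProduct.lid k H) (((Coalgebra.counit (R := k) (A := C)).rTensor H)
        (TensorProduct.map (r c) m u)) =
      Coalgebra.counit (R := k) c •
        m ((TensorProduct.lid k H)
          (((Coalgebra.counit (R := k) (A := H)).rTensor H) u)) := by
    intro u
    induction u using TensorProduct.induction_on with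
    | zero => simp
    | tmul a b =>
      simp only [TensorProduct.map_tmul, LinearMap.rTensor_tmul, TensorProduct.lid_tmul,
        map_smul, hcounit, mul_smul]
    | add u₁ u₂ ih₁ ih₂ => simp only [map_add, smul_add, ih₁, ih₂]
  rw [hxdef, claimB, Coalgebra.rTensor_counit_comul]
  simp [hmdef]


end
end

section
/- Lemma 3.5(ii) (on representatives): Suppose the coextension is Hopf Galois with inverse g of the canonical map β, and κ₀ := (ε_C ⊗ id_H) ∘ g. For every x ∈ C □_D C and h ∈ H, the element x ◁₂ h (the image of x under id_C ⊗ (− ◁ h)) lies in C □_D C and κ₀(x ◁₂ h) = κ₀(x)·h in H. -/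
open TensorProduct

noncomputable section

variable (k : Type*) [Field k]
variable (H : Type*) [Ring H] [HopfAlgebra k H]
variable (C : Type*) [AddCommGroup C] [Module k C] [Coalgebra k C]

variable (D : Type*) [AddCommGroup D] [Module k D] [Coalgebra k D]

/-- Lemma 3.5(ii): `x ◁₂ h` lies in `C □_D C` and `κ₀(x ◁₂ h) = κ₀(x)·h`. -/
theorem lemma35_ii
    (r : C →ₗ[k] H →ₗ[k] C) (π : C →ₗc[k] D)
    (hone : ∀ c : C, r c 1 = c)
    (hmul : ∀ (c : C) (h h' : H), r (r c h) h' = r c (h * h'))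
    (hcomul : ∀ (c : C) (h : H),
      Coalgebra.comul (R := k) (r c h) =
        TensorProduct.map (actL k H C r) (actL k H C r)
          (TensorProduct.tensorTensorTensorComm k C C H H
            (Coalgebra.comul (R := k) c ⊗ₜ[k] Coalgebra.comul (R := k) h)))
    (hcounit : ∀ (c : C) (h : H),
      Coalgebra.counit (R := k) (r c h) =
        Coalgebra.counit (R := k) c * Coalgebra.counit (R := k) h)
    (hπsurj : Function.Surjective π)
    (hker : LinearMap.ker π.toLinearMap = coidealI k H C r)
    (hβ : ∀ x : C ⊗[k] H, βmap k H C r x ∈ cot k C D π)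
    (g : cot k C D π →ₗ[k] C ⊗[k] H)
    (hgβ : ∀ x : C ⊗[k] H, g ⟨βmap k H C r x, hβ x⟩ = x)
    (hβg : ∀ y : cot k C D π, βmap k H C r (g y) = (y : C ⊗[k] C))
    :
    ∀ (x : cot k C D π) (h : H),
      ∃ hm : ((r.flip h).lTensor C) (x : C ⊗[k] C) ∈ cot k C D π,
        κmap k H C D π g ⟨((r.flip h).lTensor C) (x : C ⊗[k] C), hm⟩ =
          κmap k H C D π g x * h := by
  intro x h
  have key : ∀ y : C ⊗[k] H, ((r.flip h).lTensor C) (βmap k H C r y) =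
      βmap k H C r (((LinearMap.mulRight k h)).lTensor C y) := by
    intro y
    induction y using TensorProduct.induction_on with
    | zero => simp
    | add a b ha hb => simp [map_add, ha, hb]
    | tmul c h' =>
      have aux : ∀ t : C ⊗[k] C,
          ((r.flip h).lTensor C) (((actL k H C r).lTensor C)
            ((TensorProduct.assoc k C C H) (t ⊗ₜ[k] h'))) =
          ((actL k H C r).lTensor C)
            ((TensorProduct.assoc k C C H) (t ⊗ₜ[k] (h' * h))) := by
        intro t
        induction t using TensorProduct.induction_on with
        | zero => simp
        | add a b ha hb => simp only [TensorProduct.add_tmul, map_add, ha, hb]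
        | tmul a b => simp [actL, hmul]
      simpa [βmap] using aux (Coalgebra.comul (R := k) c)
  set M : C ⊗[k] H →ₗ[k] C ⊗[k] H := (LinearMap.mulRight k h).lTensor C with hM
  have heq : ((r.flip h).lTensor C) (x : C ⊗[k] C) = βmap k H C r (M (g x)) := by
    rw [← hβg x]; exact key _
  have hm : ((r.flip h).lTensor C) (x : C ⊗[k] C) ∈ cot k C D π := by
    rw [heq]; exact hβ (M (g x))
  refine ⟨hm, ?_⟩
  have hsub : (⟨((r.flip h).lTensor C) (x : C ⊗[k] C), hm⟩ : cot k C D π) =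
      ⟨βmap k H C r (M (g x)), hβ _⟩ := Subtype.ext heq
  rw [hsub]
  have hlast : ∀ y : C ⊗[k] H,
      (TensorProduct.lid k H) ((Coalgebra.counit (R := k) (A := C)).rTensor H (M y)) =
      (TensorProduct.lid k H) ((Coalgebra.counit (R := k) (A := C)).rTensor H y) * h := by
    intro y
    induction y using TensorProduct.induction_on with
    | zero => simp
    | add a b ha hb => simp [map_add, ha, hb, add_mul]
    | tmul c h' => simp [hM, smul_mul_assoc]
  simp only [κmap, LinearMap.comp_apply, hgβ]
  exact hlast (g x)

end
end

section
/- Lemma 3.5(iii) (on representatives): Suppose the coextension is Hopf Galois with inverse g of the canonical map β, and κ₀ := (ε_C ⊗ id_H) ∘ g. For every x = Σ c₁ ⊗ c₂ ∈ C □_D C and h ∈ H, the element h ◁₁ x := Σ (c₁ ◁ h) ⊗ c₂ lies in C □_D C and κ₀(Σ (c₁ ◁ h) ⊗ c₂) = S(h)·κ₀(Σ c₁ ⊗ c₂) in H. -/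
open TensorProduct

set_option maxHeartbeats 1000000
set_option synthInstance.maxHeartbeats 200000
set_option linter.unusedSectionVars false
set_option linter.unusedVariables false

noncomputable section

variable (k : Type*) [Field k]
variable (H : Type*) [Ring H] [HopfAlgebra k H]
variable (C : Type*) [AddCommGroup C] [Module k C] [Coalgebra k C]

variable (D : Type*) [AddCommGroup D] [Module k D] [Coalgebra k D]

/-! ### Auxiliary material for Lemma 3.5(iii) -/

/-- `a' ↦ S(a')·a`. -/
def mS (a : H) : H →ₗ[k] H := (LinearMap.mulRight k a) ∘ₗ HopfAlgebra.antipode (R := k)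

/-- `(c₁ ⊗ c₂) ⊗ (h₁ ⊗ h₂) ↦ (c₁ ◁ h₁) ⊗ (c₂ ◁ h₂)`. -/
def Kbig (r : C →ₗ[k] H →ₗ[k] C) : (C ⊗[k] C) ⊗[k] (H ⊗[k] H) →ₗ[k] C ⊗[k] C :=
  (TensorProduct.map (actL k H C r) (actL k H C r)) ∘ₗ
    (TensorProduct.tensorTensorTensorComm k C C H H).toLinearMap

/-- `x ⊗ y ↦ x · S(y) · a`. -/
def Wmap (a : H) : H ⊗[k] H →ₗ[k] H := LinearMap.mul' k H ∘ₗ (mS k H a).lTensor H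

/-- The map `c ⊗ a ↦ Σ (c ◁ h⁽¹⁾) ⊗ S(h⁽²⁾)·a`. -/
def Ghmap (r : C →ₗ[k] H →ₗ[k] C) (h : H) : C ⊗[k] H →ₗ[k] C ⊗[k] H :=
  (TensorProduct.map ((actL k H C r) ∘ₗ (TensorProduct.comm k H C).toLinearMap)
      (LinearMap.mul' k H ∘ₗ (HopfAlgebra.antipode (R := k)).rTensor H)) ∘ₗ
    (TensorProduct.tensorTensorTensorComm k H H C H).toLinearMap ∘ₗ
    (TensorProduct.mk k (H ⊗[k] H) (C ⊗[k] H)) (Coalgebra.comul (R := k) h)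

lemma L1 (r : C →ₗ[k] H →ₗ[k] C) (z : C ⊗[k] C) (a : H) :
    (actL k H C r).lTensor C ((TensorProduct.assoc k C C H) (z ⊗ₜ[k] a)) =
      ((r.flip a).lTensor C) z := by
  induction z using TensorProduct.induction_on with
  | zero => simp
  | tmul x y => simp [actL]
  | add u v hu hv => simp only [add_tmul, map_add, hu, hv]

lemma Lβ (r : C →ₗ[k] H →ₗ[k] C) (c : C) (a : H) :
    βmap k H C r (c ⊗ₜ[k] a) = ((r.flip a).lTensor C) (Coalgebra.comul (R := k) c) := by
  simp only [βmap, LinearMap.comp_apply, LinearMap.rTensor_tmul, LinearEquiv.coe_coe]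
  exact L1 k H C r _ a

lemma L3 (r : C →ₗ[k] H →ₗ[k] C) (z : C ⊗[k] C) (h a : H) :
    Kbig k H C r (z ⊗ₜ[k] (h ⊗ₜ[k] a)) = TensorProduct.map (r.flip h) (r.flip a) z := by
  induction z using TensorProduct.induction_on with
  | zero => simp
  | tmul x y => simp [Kbig, actL]
  | add u v hu hv => simp only [add_tmul, map_add, hu, hv]

lemma L2 (r : C →ₗ[k] H →ₗ[k] C)
    (hmul : ∀ (c : C) (h h' : H), r (r c h) h' = r c (h * h'))
    (z : C ⊗[k] C) (w : H ⊗[k] H) (m : H) :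
    ((r.flip m).lTensor C) (Kbig k H C r (z ⊗ₜ[k] w)) =
      Kbig k H C r (z ⊗ₜ[k] (((LinearMap.mulRight k m).lTensor H) w)) := by
  induction z using TensorProduct.induction_on with
  | zero => simp
  | tmul c₁ c₂ =>
    induction w using TensorProduct.induction_on with
    | zero => simp
    | tmul h₁ h₂ => simp [Kbig, actL, hmul]
    | add w₁ w₂ hw₁ hw₂ => simp only [tmul_add, map_add, hw₁, hw₂]
  | add z₁ z₂ hz₁ hz₂ => simp only [add_tmul, map_add, hz₁, hz₂]

lemma Hcomp1 {M : Type*} [AddCommMonoid M] [Module k M]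
    (f' : C →ₗ[k] M) (f : H →ₗ[k] C) (gg : H →ₗ[k] H) (w : H ⊗[k] H) :
    f'.rTensor H (TensorProduct.map f gg w) = TensorProduct.map (f' ∘ₗ f) gg w := by
  induction w using TensorProduct.induction_on with
  | zero => simp
  | tmul x y => simp
  | add u v hu hv => simp only [map_add, hu, hv]

lemma Hcomp2 {M N : Type*} [AddCommMonoid M] [Module k M] [AddCommMonoid N] [Module k N]
    (f₁ : H →ₗ[k] M) (f₂ : M →ₗ[k] N) (gg : H →ₗ[k] H) (w : H ⊗[k] H) :
    TensorProduct.map (f₂ ∘ₗ f₁) gg w = TensorProduct.map f₂ gg (f₁.rTensor H w) := by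
  induction w using TensorProduct.induction_on with
  | zero => simp
  | tmul x y => simp
  | add u v hu hv => simp only [map_add, hu, hv]

lemma HR (r : C →ₗ[k] H →ₗ[k] C)
    (hmul : ∀ (c : C) (h h' : H), r (r c h) h' = r c (h * h'))
    (a : H) (z : C ⊗[k] C) (v : H ⊗[k] (H ⊗[k] H)) :
    (actL k H C r).lTensor C ((TensorProduct.assoc k C C H)
      ((TensorProduct.map (Kbig k H C r ∘ₗ TensorProduct.mk k (C ⊗[k] C) (H ⊗[k] H) z)
          (mS k H a)) ((TensorProduct.assoc k H H H).symm v))) =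
      Kbig k H C r (z ⊗ₜ[k] ((Wmap k H a).lTensor H v)) := by
  induction v using TensorProduct.induction_on with
  | zero => simp
  | tmul h₁ w =>
    induction w using TensorProduct.induction_on with
    | zero => simp
    | tmul x y =>
      rw [TensorProduct.assoc_symm_tmul, TensorProduct.map_tmul, LinearMap.comp_apply,
        TensorProduct.mk_apply, L1, L2 k H C r hmul]
      simp [Wmap, mS, mul_assoc]
    | add w₁ w₂ hw₁ hw₂ =>
      simp only [tmul_add, map_add] at hw₁ hw₂ ⊢
      rw [hw₁, hw₂]
  | add v₁ v₂ hv₁ hv₂ =>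
    simp only [map_add, tmul_add] at hv₁ hv₂ ⊢
    rw [hv₁, hv₂]

lemma G_apply (r : C →ₗ[k] H →ₗ[k] C) (c : C) (a h : H) :
    Ghmap k H C r h (c ⊗ₜ[k] a) =
      TensorProduct.map (r c) (mS k H a) (Coalgebra.comul (R := k) h) := by
  simp only [Ghmap, LinearMap.comp_apply, TensorProduct.mk_apply, LinearEquiv.coe_coe]
  generalize Coalgebra.comul (R := k) h = w
  induction w using TensorProduct.induction_on with
  | zero => simp
  | tmul h₁ h₂ => simp [actL, mS]
  | add u v hu hv => simp only [add_tmul, map_add, hu, hv]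

lemma Hmr (a : H) (w : H ⊗[k] H) :
    LinearMap.mul' k H ((LinearMap.mulRight k a).lTensor H w) = LinearMap.mul' k H w * a := by
  induction w using TensorProduct.induction_on with
  | zero => simp
  | tmul x y => simp [mul_assoc]
  | add u v hu hv => simp only [map_add, hu, hv, add_mul]

lemma Wcomul (a h' : H) :
    Wmap k H a (Coalgebra.comul (R := k) h') = Coalgebra.counit (R := k) h' • a := by
  have h1 : (mS k H a).lTensor H (Coalgebra.comul (R := k) h') =
      (LinearMap.mulRight k a).lTensor H
        ((HopfAlgebra.antipode (R := k)).lTensor H (Coalgebra.comul (R := k) h')) := by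
    rw [mS, LinearMap.lTensor_comp_apply]
  rw [Wmap, LinearMap.comp_apply, h1, Hmr,
    HopfAlgebra.mul_antipode_lTensor_comul_apply, ← Algebra.smul_def]

lemma key2' (r : C →ₗ[k] H →ₗ[k] C)
    (hmul : ∀ (c : C) (h h' : H), r (r c h) h' = r c (h * h'))
    (hcomul : ∀ (c : C) (h : H),
      Coalgebra.comul (R := k) (r c h) =
        TensorProduct.map (actL k H C r) (actL k H C r)
          (TensorProduct.tensorTensorTensorComm k C C H H
            (Coalgebra.comul (R := k) c ⊗ₜ[k] Coalgebra.comul (R := k) h)))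
    (h : H) (y : C ⊗[k] H) :
    (r.flip h).rTensor C (βmap k H C r y) = βmap k H C r (Ghmap k H C r h y) := by
  induction y using TensorProduct.induction_on with
  | zero => simp
  | add u v hu hv => simp only [map_add, hu, hv]
  | tmul c a =>
    rw [G_apply, Lβ, ← LinearMap.comp_apply ((r.flip h).rTensor C),
      LinearMap.rTensor_comp_lTensor, ← L3 k H C r (Coalgebra.comul (R := k) c) h a]
    symm
    have comul_rc : (Coalgebra.comul (R := k)) ∘ₗ (r c) =
        (Kbig k H C r ∘ₗ TensorProduct.mk k (C ⊗[k] C) (H ⊗[k] H)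
          (Coalgebra.comul (R := k) c)) ∘ₗ (Coalgebra.comul (R := k)) := by
      refine LinearMap.ext fun h' => ?_
      simp only [LinearMap.comp_apply, TensorProduct.mk_apply, Kbig, LinearEquiv.coe_coe]
      exact hcomul c h'
    have hE : Wmap k H a ∘ₗ (Coalgebra.comul (R := k)) =
        (LinearMap.toSpanSingleton k H a) ∘ₗ (Coalgebra.counit (R := k)) := by
      refine LinearMap.ext fun h' => ?_
      simp only [LinearMap.comp_apply, LinearMap.toSpanSingleton_apply]
      exact Wcomul k H a h'
    calc βmap k H C r (TensorProduct.map (r c) (mS k H a) (Coalgebra.comul (R := k) h))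
        = (actL k H C r).lTensor C ((TensorProduct.assoc k C C H)
            ((Coalgebra.comul (R := k)).rTensor H
              (TensorProduct.map (r c) (mS k H a) (Coalgebra.comul (R := k) h)))) := by
          simp only [βmap, LinearMap.comp_apply, LinearEquiv.coe_coe]
      _ = (actL k H C r).lTensor C ((TensorProduct.assoc k C C H)
            (TensorProduct.map ((Coalgebra.comul (R := k)) ∘ₗ (r c)) (mS k H a)
              (Coalgebra.comul (R := k) h))) := by rw [Hcomp1]
      _ = (actL k H C r).lTensor C ((TensorProduct.assoc k C C H)
            (TensorProduct.map (Kbig k H C r ∘ₗ TensorProduct.mk k (C ⊗[k] C) (H ⊗[k] H)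
                (Coalgebra.comul (R := k) c)) (mS k H a)
              ((Coalgebra.comul (R := k)).rTensor H (Coalgebra.comul (R := k) h)))) := by
          rw [comul_rc, Hcomp2]
      _ = (actL k H C r).lTensor C ((TensorProduct.assoc k C C H)
            (TensorProduct.map (Kbig k H C r ∘ₗ TensorProduct.mk k (C ⊗[k] C) (H ⊗[k] H)
                (Coalgebra.comul (R := k) c)) (mS k H a)
              ((TensorProduct.assoc k H H H).symm
                ((Coalgebra.comul (R := k)).lTensor H (Coalgebra.comul (R := k) h))))) := by
          rw [Coalgebra.coassoc_symm_apply]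
      _ = Kbig k H C r (Coalgebra.comul (R := k) c ⊗ₜ[k]
            ((Wmap k H a).lTensor H
              ((Coalgebra.comul (R := k)).lTensor H (Coalgebra.comul (R := k) h)))) :=
          HR k H C r hmul a _ _
      _ = Kbig k H C r (Coalgebra.comul (R := k) c ⊗ₜ[k]
            ((Wmap k H a ∘ₗ (Coalgebra.comul (R := k))).lTensor H
              (Coalgebra.comul (R := k) h))) := by rw [LinearMap.lTensor_comp_apply]
      _ = Kbig k H C r (Coalgebra.comul (R := k) c ⊗ₜ[k]
            ((LinearMap.toSpanSingleton k H a).lTensor H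
              ((Coalgebra.counit (R := k)).lTensor H (Coalgebra.comul (R := k) h)))) := by
          rw [hE, LinearMap.lTensor_comp_apply]
      _ = Kbig k H C r (Coalgebra.comul (R := k) c ⊗ₜ[k] (h ⊗ₜ[k] a)) := by
          rw [Coalgebra.lTensor_counit_comul]
          simp

lemma Hsmul (s : k) (f : H →ₗ[k] k) (gg : H →ₗ[k] H) (w : H ⊗[k] H) :
    TensorProduct.map (s • f) gg w = s • TensorProduct.map f gg w := by
  induction w using TensorProduct.induction_on with
  | zero => simp
  | tmul x y => simp [smul_tmul']
  | add u v hu hv => simp only [map_add, hu, hv, smul_add]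

lemma Hlid (a : H) (w : H ⊗[k] H) :
    TensorProduct.lid k H
        (TensorProduct.map (Coalgebra.counit (R := k)) (mS k H a) w) =
      mS k H a (TensorProduct.lid k H
        ((Coalgebra.counit (R := k) (A := H)).rTensor H w)) := by
  induction w using TensorProduct.induction_on with
  | zero => simp
  | tmul x y => simp
  | add u v hu hv => simp only [map_add, hu, hv]

lemma key3 (r : C →ₗ[k] H →ₗ[k] C)
    (hcounit : ∀ (c : C) (h : H),
      Coalgebra.counit (R := k) (r c h) =
        Coalgebra.counit (R := k) c * Coalgebra.counit (R := k) h)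
    (h : H) (y : C ⊗[k] H) :
    (TensorProduct.lid k H)
        ((Coalgebra.counit (R := k) (A := C)).rTensor H (Ghmap k H C r h y)) =
      HopfAlgebra.antipode (R := k) h *
        (TensorProduct.lid k H) ((Coalgebra.counit (R := k) (A := C)).rTensor H y) := by
  induction y using TensorProduct.induction_on with
  | zero => simp
  | add u v hu hv => simp only [map_add, hu, hv, mul_add]
  | tmul c a =>
    rw [G_apply, Hcomp1]
    have hc : (Coalgebra.counit (R := k) (A := C)) ∘ₗ (r c) =
        Coalgebra.counit (R := k) c • (Coalgebra.counit (R := k) (A := H)) := by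
      refine LinearMap.ext fun h' => ?_
      simp only [LinearMap.comp_apply, LinearMap.smul_apply, smul_eq_mul]
      exact hcounit c h'
    rw [hc, Hsmul, map_smul, Hlid, Coalgebra.rTensor_counit_comul]
    simp [mS, mul_smul_comm]

/-- Lemma 3.5(iii): `Σ (c₁ ◁ h) ⊗ c₂` lies in `C □_D C` and `κ₀(Σ (c₁ ◁ h) ⊗ c₂) = S(h)·κ₀(Σ c₁ ⊗ c₂)`. -/
theorem lemma35_iii
    (r : C →ₗ[k] H →ₗ[k] C) (π : C →ₗc[k] D)
    (hone : ∀ c : C, r c 1 = c)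
    (hmul : ∀ (c : C) (h h' : H), r (r c h) h' = r c (h * h'))
    (hcomul : ∀ (c : C) (h : H),
      Coalgebra.comul (R := k) (r c h) =
        TensorProduct.map (actL k H C r) (actL k H C r)
          (TensorProduct.tensorTensorTensorComm k C C H H
            (Coalgebra.comul (R := k) c ⊗ₜ[k] Coalgebra.comul (R := k) h)))
    (hcounit : ∀ (c : C) (h : H),
      Coalgebra.counit (R := k) (r c h) =
        Coalgebra.counit (R := k) c * Coalgebra.counit (R := k) h)
    (hπsurj : Function.Surjective π)
    (hker : LinearMap.ker π.toLinearMap = coidealI k H C r)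
    (hβ : ∀ x : C ⊗[k] H, βmap k H C r x ∈ cot k C D π)
    (g : cot k C D π →ₗ[k] C ⊗[k] H)
    (hgβ : ∀ x : C ⊗[k] H, g ⟨βmap k H C r x, hβ x⟩ = x)
    (hβg : ∀ y : cot k C D π, βmap k H C r (g y) = (y : C ⊗[k] C))
    :
    ∀ (x : cot k C D π) (h : H),
      ∃ hm : ((r.flip h).rTensor C) (x : C ⊗[k] C) ∈ cot k C D π,
        κmap k H C D π g ⟨((r.flip h).rTensor C) (x : C ⊗[k] C), hm⟩ =
          HopfAlgebra.antipode (R := k) h * κmap k H C D π g x := by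
  intro x h
  have e : ((r.flip h).rTensor C) (x : C ⊗[k] C) =
      βmap k H C r (Ghmap k H C r h (g x)) := by
    conv_lhs => rw [← hβg x]
    exact key2' k H C r hmul hcomul h (g x)
  have hm : ((r.flip h).rTensor C) (x : C ⊗[k] C) ∈ cot k C D π := by
    rw [e]; exact hβ _
  refine ⟨hm, ?_⟩
  have hsub : (⟨((r.flip h).rTensor C) (x : C ⊗[k] C), hm⟩ : cot k C D π) =
      ⟨βmap k H C r (Ghmap k H C r h (g x)), hβ _⟩ := Subtype.ext e
  rw [hsub]
  have hκ1 : κmap k H C D π g ⟨βmap k H C r (Ghmap k H C r h (g x)), hβ _⟩ =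
      (TensorProduct.lid k H)
        ((Coalgebra.counit (R := k) (A := C)).rTensor H (Ghmap k H C r h (g x))) := by
    simp only [κmap, LinearMap.comp_apply, LinearEquiv.coe_coe, hgβ]
  have hκ2 : κmap k H C D π g x =
      (TensorProduct.lid k H)
        ((Coalgebra.counit (R := k) (A := C)).rTensor H (g x)) := by
    simp only [κmap, LinearMap.comp_apply, LinearEquiv.coe_coe]
  rw [hκ1, hκ2]
  exact key3 k H C r hcounit h (g x)

end
end

section
/- Lemma 3.5(iv) (on representatives): Suppose the coextension is Hopf Galois with inverse g of the canonical map β, and κ₀ := (ε_C ⊗ id_H) ∘ g. For every x = Σ c ⊗ c' ∈ C □_D C one has Σ c⁽¹⁾ ◁ κ₀(c⁽²⁾ ⊗ c') = Σ ε_C(c)c' = (ε_C ⊗ id_C)(x) in C. -/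
open TensorProduct

noncomputable section

variable (k : Type*) [Field k]
variable (H : Type*) [Ring H] [HopfAlgebra k H]
variable (C : Type*) [AddCommGroup C] [Module k C] [Coalgebra k C]

variable (D : Type*) [AddCommGroup D] [Module k D] [Coalgebra k D]

/-- Lemma 3.5(iv): `Σ c⁽¹⁾ ◁ κ₀(c⁽²⁾ ⊗ c') = Σ ε_C(c)c' = (ε_C ⊗ id_C)(x)` for every `x = Σ c ⊗ c' ∈ C □_D C`. -/
theorem lemma35_iv
    (r : C →ₗ[k] H →ₗ[k] C) (π : C →ₗc[k] D)
    (hone : ∀ c : C, r c 1 = c)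
    (hmul : ∀ (c : C) (h h' : H), r (r c h) h' = r c (h * h'))
    (hcomul : ∀ (c : C) (h : H),
      Coalgebra.comul (R := k) (r c h) =
        TensorProduct.map (actL k H C r) (actL k H C r)
          (TensorProduct.tensorTensorTensorComm k C C H H
            (Coalgebra.comul (R := k) c ⊗ₜ[k] Coalgebra.comul (R := k) h)))
    (hcounit : ∀ (c : C) (h : H),
      Coalgebra.counit (R := k) (r c h) =
        Coalgebra.counit (R := k) c * Coalgebra.counit (R := k) h)
    (hπsurj : Function.Surjective π)
    (hker : LinearMap.ker π.toLinearMap = coidealI k H C r)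
    (hβ : ∀ x : C ⊗[k] H, βmap k H C r x ∈ cot k C D π)
    (g : cot k C D π →ₗ[k] C ⊗[k] H)
    (hgβ : ∀ x : C ⊗[k] H, g ⟨βmap k H C r x, hβ x⟩ = x)
    (hβg : ∀ y : cot k C D π, βmap k H C r (g y) = (y : C ⊗[k] C))
    :
    ∀ x : cot k C D π,
      ∃ w : C ⊗[k] (cot k C D π),
        ((cot k C D π).subtype.lTensor C) w =
          (TensorProduct.assoc k C C C)
            (((Coalgebra.comul (R := k) (A := C)).rTensor C) (x : C ⊗[k] C)) ∧
        actL k H C r (((κmap k H C D π g).lTensor C) w) =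
          (TensorProduct.lid k C)
            (((Coalgebra.counit (R := k) (A := C)).rTensor C) (x : C ⊗[k] C)) := by
  classical
  have hassoc : ∀ (y : C ⊗[k] C) (h : H),
      (TensorProduct.assoc k C C H) (y ⊗ₜ[k] h) =
        LinearMap.lTensor C ((TensorProduct.mk k C H).flip h) y := by
    intro y h
    induction y using TensorProduct.induction_on with
    | zero => simp
    | tmul a b => simp [TensorProduct.mk]
    | add a b ha hb => simp [TensorProduct.add_tmul, ha, hb]
  have hβpt : ∀ (c : C) (h : H),
      βmap k H C r (c ⊗ₜ[k] h) =
        LinearMap.lTensor C ((actL k H C r) ∘ₗ ((TensorProduct.mk k C H).flip h))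
          (Coalgebra.comul (R := k) c) := by
    intro c h
    simp only [βmap, LinearMap.coe_comp, Function.comp_apply, LinearEquiv.coe_coe,
      LinearMap.rTensor_tmul]
    rw [hassoc, ← LinearMap.comp_apply, ← LinearMap.lTensor_comp]
  have hβm : ∀ h : H,
      βmap k H C r ∘ₗ (TensorProduct.mk k C H).flip h =
        (LinearMap.lTensor C ((actL k H C r) ∘ₗ ((TensorProduct.mk k C H).flip h))) ∘ₗ
          (Coalgebra.comul (R := k)) :=
    fun h => LinearMap.ext fun c => hβpt c h
  have hnatm : ∀ h : H,
      (TensorProduct.assoc k C C C).toLinearMap ∘ₗ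
        LinearMap.lTensor (C ⊗[k] C) ((actL k H C r) ∘ₗ ((TensorProduct.mk k C H).flip h)) =
      (LinearMap.lTensor C
        (LinearMap.lTensor C ((actL k H C r) ∘ₗ ((TensorProduct.mk k C H).flip h)))) ∘ₗ
        (TensorProduct.assoc k C C C).toLinearMap := by
    intro h
    apply TensorProduct.ext_threefold
    intro a b c
    simp
  have hnat : ∀ (h : H) (y : (C ⊗[k] C) ⊗[k] C),
      (TensorProduct.assoc k C C C)
        (LinearMap.lTensor (C ⊗[k] C)
          ((actL k H C r) ∘ₗ ((TensorProduct.mk k C H).flip h)) y) =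
      LinearMap.lTensor C
        (LinearMap.lTensor C ((actL k H C r) ∘ₗ ((TensorProduct.mk k C H).flip h)))
        ((TensorProduct.assoc k C C C) y) := by
    intro h y
    simpa using LinearMap.congr_fun (hnatm h) y
  set βr : C ⊗[k] H →ₗ[k] cot k C D π :=
    LinearMap.codRestrict _ (βmap k H C r) hβ with hβrdef
  have hsub : (cot k C D π).subtype ∘ₗ βr = βmap k H C r :=
    LinearMap.subtype_comp_codRestrict _ _ hβ
  -- part A, as a statement about all z : C ⊗ H
  have hA : ∀ z : C ⊗[k] H,
      LinearMap.lTensor C (cot k C D π).subtype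
        (LinearMap.lTensor C βr
          ((TensorProduct.assoc k C C H)
            (LinearMap.rTensor H (Coalgebra.comul (R := k)) z))) =
      (TensorProduct.assoc k C C C)
        (LinearMap.rTensor C (Coalgebra.comul (R := k)) (βmap k H C r z)) := by
    intro z
    induction z using TensorProduct.induction_on with
    | zero => simp
    | tmul c h =>
      rw [LinearMap.rTensor_tmul, hassoc, hβpt,
        ← LinearMap.comp_apply (LinearMap.lTensor C (cot k C D π).subtype),
        ← LinearMap.lTensor_comp, hsub,
        ← LinearMap.comp_apply, ← LinearMap.lTensor_comp, hβm h,
        LinearMap.lTensor_comp, LinearMap.comp_apply,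
        ← LinearMap.comp_apply (LinearMap.rTensor C (Coalgebra.comul (R := k))),
        LinearMap.rTensor_comp_lTensor, ← LinearMap.lTensor_comp_rTensor,
        LinearMap.comp_apply, hnat, Coalgebra.coassoc_apply]
    | add u v hu hv => simp only [map_add, hu, hv]
  -- κ ∘ βr on pure tensors
  have hκ : ∀ (c' : C) (h : H),
      κmap k H C D π g (βr (c' ⊗ₜ[k] h)) = Coalgebra.counit (R := k) c' • h := by
    intro c' h
    have e : βr (c' ⊗ₜ[k] h) = ⟨βmap k H C r (c' ⊗ₜ[k] h), hβ _⟩ := rfl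
    rw [κmap, LinearMap.comp_apply, LinearMap.comp_apply, e, hgβ,
      LinearMap.rTensor_tmul]
    simp
  have hκm : ∀ h : H,
      (κmap k H C D π g) ∘ₗ βr ∘ₗ (TensorProduct.mk k C H).flip h =
        (LinearMap.toSpanSingleton k H h) ∘ₗ (Coalgebra.counit (R := k) (A := C)) := by
    intro h
    refine LinearMap.ext fun c' => ?_
    simp only [LinearMap.comp_apply, TensorProduct.mk_apply, LinearMap.flip_apply,
      LinearMap.toSpanSingleton_apply]
    exact hκ c' h
  -- part B
  have hB : ∀ z : C ⊗[k] H,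
      actL k H C r
        (LinearMap.lTensor C (κmap k H C D π g)
          (LinearMap.lTensor C βr
            ((TensorProduct.assoc k C C H)
              (LinearMap.rTensor H (Coalgebra.comul (R := k)) z)))) =
      (TensorProduct.lid k C)
        (LinearMap.rTensor C (Coalgebra.counit (R := k)) (βmap k H C r z)) := by
    intro z
    induction z using TensorProduct.induction_on with
    | zero => simp
    | tmul c h =>
      have e1 : LinearMap.lTensor C (κmap k H C D π g)
          (LinearMap.lTensor C βr
            (LinearMap.lTensor C ((TensorProduct.mk k C H).flip h)
              (Coalgebra.comul (R := k) c))) = c ⊗ₜ[k] h := by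
        rw [← LinearMap.comp_apply, ← LinearMap.lTensor_comp,
          ← LinearMap.comp_apply, ← LinearMap.lTensor_comp, LinearMap.comp_assoc, hκm h,
          LinearMap.lTensor_comp, LinearMap.comp_apply,
          Coalgebra.lTensor_counit_comul, LinearMap.lTensor_tmul]
        simp
      have e2 : LinearMap.rTensor C (Coalgebra.counit (R := k))
          (LinearMap.lTensor C ((actL k H C r) ∘ₗ ((TensorProduct.mk k C H).flip h))
            (Coalgebra.comul (R := k) c)) =
          (1 : k) ⊗ₜ[k] (actL k H C r (c ⊗ₜ[k] h)) := by
        rw [← LinearMap.comp_apply, LinearMap.rTensor_comp_lTensor,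
          ← LinearMap.lTensor_comp_rTensor, LinearMap.comp_apply,
          Coalgebra.rTensor_counit_comul, LinearMap.lTensor_tmul]
        simp
      rw [LinearMap.rTensor_tmul, hassoc, hβpt, e1, e2]
      simp [actL]
    | add u v hu hv => simp only [map_add, hu, hv]
  intro x
  refine ⟨LinearMap.lTensor C βr
      ((TensorProduct.assoc k C C H)
        (LinearMap.rTensor H (Coalgebra.comul (R := k)) (g x))), ?_, ?_⟩
  · rw [← hβg x]; exact hA (g x)
  · rw [← hβg x]; exact hB (g x)

end
end

section
/- Theorem 3.8, stability (on representatives): Suppose the coextension is Hopf Galois with inverse g of the canonical map β, and κ₀ := (ε_C ⊗ id_H) ∘ g. For every c ∈ C^D, the element Σ c⁽²⁾ ⊗ (c⁽³⁾ ⊗ c⁽¹⁾) lies in C ⊗ (C □_D C) and Σ c⁽²⁾ ◁ κ₀(c⁽³⁾ ⊗ c⁽¹⁾) = c; that is, the left H-coaction c ↦ Σ κ₀(c⁽³⁾ ⊗ c⁽¹⁾) ⊗ c⁽²⁾ on C^D together with the right H-action ◁ is stable. -/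
open TensorProduct

noncomputable section

variable (k : Type*) [Field k]
variable (H : Type*) [Ring H] [HopfAlgebra k H]
variable (C : Type*) [AddCommGroup C] [Module k C] [Coalgebra k C]

variable (D : Type*) [AddCommGroup D] [Module k D] [Coalgebra k D]

/-! ### Auxiliary lemmas for Theorem 3.8 (stability) -/

lemma aux_A1 (π : C →ₗc[k] D) :
    (cotL1 k C D π) ∘ₗ (TensorProduct.comm k C C).toLinearMap =
      (TensorProduct.comm k C (C ⊗[k] D)).toLinearMap ∘ₗ
        ((π.toLinearMap.lTensor C).lTensor C) ∘ₗ
        ((Coalgebra.comul (R := k) (A := C)).lTensor C) := by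
  apply TensorProduct.ext'
  intro a b
  simp [cotL1]

lemma aux_A2 (π : C →ₗc[k] D) :
    (cotL2 k C D π) ∘ₗ (TensorProduct.comm k C C).toLinearMap =
      ((TensorProduct.assoc k C D C).symm.toLinearMap ∘ₗ
        ((π.toLinearMap.rTensor C).lTensor C) ∘ₗ
        (TensorProduct.comm k (C ⊗[k] C) C).toLinearMap) ∘ₗ
        ((Coalgebra.comul (R := k) (A := C)).rTensor C) := by
  apply TensorProduct.ext'
  intro a b
  simp [cotL2]

lemma aux_A3 (π : C →ₗc[k] D) :
    ((TensorProduct.comm k C (C ⊗[k] D)).toLinearMap ∘ₗ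
        ((π.toLinearMap.lTensor C).lTensor C)) ∘ₗ
        (TensorProduct.assoc k C C C).toLinearMap =
      ((TensorProduct.comm k C (C ⊗[k] D)).toLinearMap ∘ₗ
        (TensorProduct.assoc k C C D).toLinearMap) ∘ₗ
        (π.toLinearMap.lTensor (C ⊗[k] C)) := by
  apply TensorProduct.ext_threefold
  intro a b e
  simp

lemma aux_A5 (π : C →ₗc[k] D) :
    (TensorProduct.assoc k C D C).symm.toLinearMap ∘ₗ
        ((π.toLinearMap.rTensor C).lTensor C) ∘ₗ
        (TensorProduct.comm k (C ⊗[k] C) C).toLinearMap =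
      (((TensorProduct.comm k C (C ⊗[k] D)).toLinearMap ∘ₗ
        (TensorProduct.assoc k C C D).toLinearMap) ∘ₗ
        (π.toLinearMap.lTensor (C ⊗[k] C))) ∘ₗ
        (TensorProduct.comm k C (C ⊗[k] C)).toLinearMap ∘ₗ
        (TensorProduct.assoc k C C C).toLinearMap := by
  apply TensorProduct.ext_threefold
  intro a b e
  simp

lemma aux_A6 (π : C →ₗc[k] D) :
    (π.toLinearMap.lTensor (C ⊗[k] C)) ∘ₗ ((Coalgebra.comul (R := k) (A := C)).rTensor C) =
      ((Coalgebra.comul (R := k) (A := C)).rTensor D) ∘ₗ (π.toLinearMap.lTensor C) := by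
  apply TensorProduct.ext'
  intro a b
  simp

lemma aux_A7 (π : C →ₗc[k] D) :
    (π.toLinearMap.lTensor (C ⊗[k] C)) ∘ₗ
        (TensorProduct.comm k C (C ⊗[k] C)).toLinearMap ∘ₗ
        ((Coalgebra.comul (R := k) (A := C)).lTensor C) =
      ((Coalgebra.comul (R := k) (A := C)).rTensor D) ∘ₗ
        (π.toLinearMap.lTensor C) ∘ₗ (TensorProduct.comm k C C).toLinearMap := by
  apply TensorProduct.ext'
  intro a b
  simp

lemma aux_A4 :
    ((Coalgebra.comul (R := k) (A := C)).rTensor C) ∘ₗ (TensorProduct.comm k C C).toLinearMap =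
      (TensorProduct.comm k C (C ⊗[k] C)).toLinearMap ∘ₗ
        ((Coalgebra.comul (R := k) (A := C)).lTensor C) := by
  apply TensorProduct.ext'
  intro a b
  simp

lemma aux_B (r : C →ₗ[k] H →ₗ[k] C) :
    ((βmap k H C r).lTensor C) ∘ₗ
        ((TensorProduct.assoc k C C H).toLinearMap ∘ₗ
          ((Coalgebra.comul (R := k) (A := C)).rTensor H)) =
      ((TensorProduct.assoc k C C C).toLinearMap ∘ₗ
        ((Coalgebra.comul (R := k) (A := C)).rTensor C)) ∘ₗ βmap k H C r := by
  apply TensorProduct.ext'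
  intro c h
  have P1 : ∀ X : C ⊗[k] C,
      (βmap k H C r).lTensor C ((TensorProduct.assoc k C C H) (X ⊗ₜ[k] h)) =
        (((actL k H C r).lTensor C).lTensor C)
          (((TensorProduct.assoc k C C H).toLinearMap.lTensor C)
            ((TensorProduct.assoc k C (C ⊗[k] C) H)
              ((((Coalgebra.comul (R := k) (A := C)).lTensor C) X) ⊗ₜ[k] h))) := by
    intro X
    induction X using TensorProduct.induction_on with
    | zero => simp
    | tmul a b => simp [βmap]
    | add x y hx hy => simp [add_tmul, hx, hy]
  have P2 : ∀ X : C ⊗[k] C,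
      (TensorProduct.assoc k C C C)
        (((Coalgebra.comul (R := k) (A := C)).rTensor C)
          (((actL k H C r).lTensor C) ((TensorProduct.assoc k C C H) (X ⊗ₜ[k] h)))) =
        (((actL k H C r).lTensor C).lTensor C)
          (((TensorProduct.assoc k C C H).toLinearMap.lTensor C)
            ((TensorProduct.assoc k C (C ⊗[k] C) H)
              (((TensorProduct.assoc k C C C)
                (((Coalgebra.comul (R := k) (A := C)).rTensor C) X)) ⊗ₜ[k] h))) := by
    intro X
    induction X using TensorProduct.induction_on with
    | zero => simp
    | tmul a b =>
      have Q : ∀ Y : C ⊗[k] C,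
          (TensorProduct.assoc k C C C) (Y ⊗ₜ[k] (actL k H C r (b ⊗ₜ[k] h))) =
            (((actL k H C r).lTensor C).lTensor C)
              (((TensorProduct.assoc k C C H).toLinearMap.lTensor C)
                ((TensorProduct.assoc k C (C ⊗[k] C) H)
                  (((TensorProduct.assoc k C C C) (Y ⊗ₜ[k] b)) ⊗ₜ[k] h))) := by
        intro Y
        induction Y using TensorProduct.induction_on with
        | zero => simp
        | tmul p q => simp
        | add x y hx hy => simp [add_tmul, hx, hy]
      simpa using Q (Coalgebra.comul (R := k) a)
    | add x y hx hy => simp [add_tmul, hx, hy]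
  have hβc : βmap k H C r (c ⊗ₜ[k] h) =
      ((actL k H C r).lTensor C)
        ((TensorProduct.assoc k C C H) ((Coalgebra.comul (R := k) (A := C) c) ⊗ₜ[k] h)) := by
    simp [βmap]
  simp only [LinearMap.comp_apply, LinearEquiv.coe_coe, LinearMap.rTensor_tmul]
  rw [P1 (Coalgebra.comul (R := k) c), hβc, P2 (Coalgebra.comul (R := k) c),
    Coalgebra.coassoc_apply]

lemma aux_C1 (r : C →ₗ[k] H →ₗ[k] C) :
    (actL k H C r) ∘ₗ
        ((((TensorProduct.lid k H).toLinearMap ∘ₗ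
            ((Coalgebra.counit (R := k) (A := C)).rTensor H)).lTensor C) ∘ₗ
          ((TensorProduct.assoc k C C H).toLinearMap ∘ₗ
            ((Coalgebra.comul (R := k) (A := C)).rTensor H))) = actL k H C r := by
  apply TensorProduct.ext'
  intro c h
  have P : ∀ X : C ⊗[k] C,
      (((TensorProduct.lid k H).toLinearMap ∘ₗ
          ((Coalgebra.counit (R := k) (A := C)).rTensor H)).lTensor C)
        ((TensorProduct.assoc k C C H) (X ⊗ₜ[k] h)) =
      ((TensorProduct.rid k C) (((Coalgebra.counit (R := k) (A := C)).lTensor C) X)) ⊗ₜ[k] h := by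
    intro X
    induction X using TensorProduct.induction_on with
    | zero => simp
    | tmul a b => simp [TensorProduct.smul_tmul']
    | add x y hx hy => simp [add_tmul, hx, hy]
  simp only [LinearMap.comp_apply, LinearEquiv.coe_coe, LinearMap.rTensor_tmul]
  rw [P (Coalgebra.comul (R := k) c), Coalgebra.lTensor_counit_comul]
  simp

lemma aux_C2 (r : C →ₗ[k] H →ₗ[k] C) :
    ((TensorProduct.lid k C).toLinearMap ∘ₗ
        ((Coalgebra.counit (R := k) (A := C)).rTensor C)) ∘ₗ βmap k H C r =
      actL k H C r := by
  apply TensorProduct.ext'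
  intro c h
  have P : ∀ X : C ⊗[k] C,
      (TensorProduct.lid k C)
        (((Coalgebra.counit (R := k) (A := C)).rTensor C)
          (((actL k H C r).lTensor C) ((TensorProduct.assoc k C C H) (X ⊗ₜ[k] h)))) =
      actL k H C r
        (((TensorProduct.lid k C) (((Coalgebra.counit (R := k) (A := C)).rTensor C) X)) ⊗ₜ[k] h) := by
    intro X
    induction X using TensorProduct.induction_on with
    | zero => simp
    | tmul a b => simp [← TensorProduct.smul_tmul', map_smul]
    | add x y hx hy => simp [add_tmul, hx, hy]
  simp only [LinearMap.comp_apply, LinearEquiv.coe_coe, LinearMap.rTensor_tmul, βmap,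
    LinearMap.lTensor_tmul]
  rw [P (Coalgebra.comul (R := k) c), Coalgebra.rTensor_counit_comul]
  simp

lemma aux_C3 :
    (TensorProduct.lid k C).toLinearMap ∘ₗ
        ((Coalgebra.counit (R := k) (A := C)).rTensor C) ∘ₗ
        (TensorProduct.comm k C C).toLinearMap =
      (TensorProduct.rid k C).toLinearMap ∘ₗ
        ((Coalgebra.counit (R := k) (A := C)).lTensor C) := by
  apply TensorProduct.ext'
  intro a b
  simp


/-- Theorem 3.8, stability: for `c ∈ C^D`, the element `Σ c⁽²⁾ ⊗ (c⁽³⁾ ⊗ c⁽¹⁾)` lies in `C ⊗ (C □_D C)` (witnessed by `w`) and `Σ c⁽²⁾ ◁ κ₀(c⁽³⁾ ⊗ c⁽¹⁾) = c`. -/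
theorem thm38_stability
    (r : C →ₗ[k] H →ₗ[k] C) (π : C →ₗc[k] D)
    (hone : ∀ c : C, r c 1 = c)
    (hmul : ∀ (c : C) (h h' : H), r (r c h) h' = r c (h * h'))
    (hcomul : ∀ (c : C) (h : H),
      Coalgebra.comul (R := k) (r c h) =
        TensorProduct.map (actL k H C r) (actL k H C r)
          (TensorProduct.tensorTensorTensorComm k C C H H
            (Coalgebra.comul (R := k) c ⊗ₜ[k] Coalgebra.comul (R := k) h)))
    (hcounit : ∀ (c : C) (h : H),
      Coalgebra.counit (R := k) (r c h) =
        Coalgebra.counit (R := k) c * Coalgebra.counit (R := k) h)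
    (hπsurj : Function.Surjective π)
    (hker : LinearMap.ker π.toLinearMap = coidealI k H C r)
    (hβ : ∀ x : C ⊗[k] H, βmap k H C r x ∈ cot k C D π)
    (g : cot k C D π →ₗ[k] C ⊗[k] H)
    (hgβ : ∀ x : C ⊗[k] H, g ⟨βmap k H C r x, hβ x⟩ = x)
    (hβg : ∀ y : cot k C D π, βmap k H C r (g y) = (y : C ⊗[k] C))
    :
    ∀ c : C, memCD k C D π c →
      ∃ w : C ⊗[k] (cot k C D π),
        ((cot k C D π).subtype.lTensor C) w = coactElem k C c ∧
        actL k H C r (((κmap k H C D π g).lTensor C) w) = c := by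
    intro c hc
    unfold memCD at hc
    -- Part A: membership of `Σ c⁽²⁾ ⊗ c⁽¹⁾` in the cotensor product
    have key : cotL1 k C D π ((TensorProduct.comm k C C) (Coalgebra.comul (R := k) c)) =
        cotL2 k C D π ((TensorProduct.comm k C C) (Coalgebra.comul (R := k) c)) := by
      have h1 := LinearMap.congr_fun (aux_A1 k C D π) (Coalgebra.comul (R := k) c)
      have h2 := LinearMap.congr_fun (aux_A2 k C D π) (Coalgebra.comul (R := k) c)
      have h3 := LinearMap.congr_fun (aux_A3 k C D π)
        ((Coalgebra.comul (R := k) (A := C)).rTensor C (Coalgebra.comul (R := k) c))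
      have h5 := LinearMap.congr_fun (aux_A5 k C D π)
        ((Coalgebra.comul (R := k) (A := C)).rTensor C (Coalgebra.comul (R := k) c))
      have h6 := LinearMap.congr_fun (aux_A6 k C D π) (Coalgebra.comul (R := k) c)
      have h7 := LinearMap.congr_fun (aux_A7 k C D π) (Coalgebra.comul (R := k) c)
      have hco := Coalgebra.coassoc_apply (R := k) c
      simp only [LinearMap.comp_apply, LinearEquiv.coe_coe] at h1 h2 h3 h5 h6 h7
      rw [h1, h2, h5, ← hco, h3, h6, hco, h7, hc]
    have hy₀ : (TensorProduct.comm k C C) (Coalgebra.comul (R := k) c) ∈ cot k C D π := by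
      simp only [cot, LinearMap.mem_ker, LinearMap.sub_apply, sub_eq_zero]
      exact key
    set Y : cot k C D π := ⟨(TensorProduct.comm k C C) (Coalgebra.comul (R := k) c), hy₀⟩
      with hY
    set βr : C ⊗[k] H →ₗ[k] cot k C D π :=
      LinearMap.codRestrict (cot k C D π) (βmap k H C r) hβ with hβr
    refine ⟨(βr.lTensor C)
        (((TensorProduct.assoc k C C H).toLinearMap ∘ₗ
          ((Coalgebra.comul (R := k) (A := C)).rTensor H)) (g Y)), ?_, ?_⟩
    · -- Part B: the witness maps to `coactElem c`
      have hsub : (cot k C D π).subtype ∘ₗ βr = βmap k H C r :=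
        LinearMap.subtype_comp_codRestrict _ _ _
      rw [← LinearMap.lTensor_comp_apply, hsub]
      have hB := LinearMap.congr_fun (aux_B k H C r) (g Y)
      simp only [LinearMap.comp_apply, LinearEquiv.coe_coe] at hB ⊢
      rw [hB, hβg Y]
      have h4 := LinearMap.congr_fun (aux_A4 k C) (Coalgebra.comul (R := k) c)
      simp only [LinearMap.comp_apply, LinearEquiv.coe_coe] at h4
      show (TensorProduct.assoc k C C C)
        (((Coalgebra.comul (R := k) (A := C)).rTensor C)
          ((TensorProduct.comm k C C) (Coalgebra.comul (R := k) c))) = _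
      rw [h4]
      simp [coactElem, rot3, Δ3]
    · -- Part C: stability
      have hκβr : (κmap k H C D π g) ∘ₗ βr =
          (TensorProduct.lid k H).toLinearMap ∘ₗ
            ((Coalgebra.counit (R := k) (A := C)).rTensor H) := by
        apply LinearMap.ext
        intro x
        have hgx : g (βr x) = x := by
          have : βr x = ⟨βmap k H C r x, hβ x⟩ := rfl
          rw [this]
          exact hgβ x
        simp only [LinearMap.comp_apply, κmap, hgx]
      rw [← LinearMap.lTensor_comp_apply, hκβr]
      have hC1 := LinearMap.congr_fun (aux_C1 k H C r) (g Y)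
      simp only [LinearMap.comp_apply, LinearEquiv.coe_coe] at hC1 ⊢
      rw [hC1]
      have hC2 := LinearMap.congr_fun (aux_C2 k H C r) (g Y)
      simp only [LinearMap.comp_apply, LinearEquiv.coe_coe] at hC2
      rw [← hC2, hβg Y]
      have hC3 := LinearMap.congr_fun (aux_C3 k C) (Coalgebra.comul (R := k) c)
      simp only [LinearMap.comp_apply, LinearEquiv.coe_coe] at hC3
      show (TensorProduct.lid k C)
        (((Coalgebra.counit (R := k) (A := C)).rTensor C)
          ((TensorProduct.comm k C C) (Coalgebra.comul (R := k) c))) = c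
      rw [hC3, Coalgebra.lTensor_counit_comul]
      simp

end
end
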